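/- (Positive invariance of the consensus box without antagonism) Suppose a_{ik} ≥ 0 for all i,k (no antagonistic relations). Let m_min := min_i m_i and m_max := max_i m_i, and let M := [m_min, m_max]. Then the box Mⁿ is positively invariant: for every solution z of the opinion dynamics with z(0) ∈ Mⁿ, one has z(t) ∈ Mⁿ for all t ≥ 0. -/

import Mathlib

/-!
Let `M = max_j m_j`. The upper envelope `H t = max (M, max_j z_j t)` has nonpositive right Dini
derivative: if a coordinate `z_j` attains `H t ≥ M`, every coupling term
`a_{jk} r_k (z_k - z_j) / B` is `≤ 0`, and since the self function `S_j` is decreasing with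
`S_j m_j = 0` and `z_j ≥ M ≥ m_j`, also `S_j (z_j) ≤ 0`. Hence `H` never exceeds `H 0 = M`.
The lower bound is the mirror image.
-/

open Finset Filter Topology Set

theorem eventually_slope_finset_sup'_lt {ι : Type*} {s : Finset ι} (hs : s.Nonempty)
    {u : ι → ℝ → ℝ} {x ρ : ℝ} (hρ : 0 < ρ)
    (hu : ∀ i ∈ s, ContinuousWithinAt (u i) (Ioi x) x)
    (hd : ∀ i ∈ s, u i x = s.sup' hs (u · x) →
      ∃ d ≤ 0, HasDerivWithinAt (u i) d (Ioi x) x) :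
    ∀ᶠ y in 𝓝[>] x, slope (fun t => s.sup' hs (u · t)) x y < ρ := by
  set S := s.sup' hs (u · x)
  have hbranch : ∀ i ∈ s, ∀ᶠ y in 𝓝[>] x, u i y < S + ρ * (y - x) := by
    intro i hi
    rcases (le_sup' (u · x) hi).lt_or_eq with hlt | heq
    · filter_upwards [(hu i hi).eventually_lt_const hlt, self_mem_nhdsWithin]
        with y hy (hxy : x < y)
      nlinarith
    · obtain ⟨d, hd0, hder⟩ := hd i hi heq
      have hslope : ∀ᶠ y in 𝓝[>] x, slope (u i) x y < ρ :=
        ((hasDerivWithinAt_iff_tendsto_slope' (lt_irrefl x)).1 hder).eventually_lt_const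
          (hd0.trans_lt hρ)
      filter_upwards [hslope, self_mem_nhdsWithin] with y hy (hxy : x < y)
      rw [slope_def_field, div_lt_iff₀ (sub_pos.2 hxy)] at hy
      linarith
  filter_upwards [(eventually_all_finset s).2 hbranch, self_mem_nhdsWithin] with y hy (hxy : x < y)
  rw [slope_def_field, div_lt_iff₀ (sub_pos.2 hxy)]
  linarith [(sup'_lt_iff hs).2 hy]

section Invariance

variable {ι : Type*} [Fintype ι] {z v : ℝ → ι → ℝ} {c t : ℝ}

theorem le_of_hasDerivAt_nonpos_at_max
    (hz : ∀ t, 0 ≤ t → ∀ j, HasDerivAt (fun s => z s j) (v t j) t)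
    (hv : ∀ t, 0 ≤ t → ∀ j, c ≤ z t j → (∀ k, z t k ≤ z t j) → v t j ≤ 0)
    (h0 : ∀ j, z 0 j ≤ c) (ht : 0 ≤ t) (j : ι) : z t j ≤ c := by
  let u : Option ι → ℝ → ℝ := fun i s => i.elim c (z s)
  let H : ℝ → ℝ := fun s => univ.sup' univ_nonempty (u · s)
  have hu_le (s : ℝ) (i : Option ι) : u i s ≤ H s := le_sup' (u · s) (mem_univ i)
  have hcont : ContinuousOn H (Icc 0 t) := by
    refine ContinuousOn.finset_sup'_apply _ fun i _ => ?_
    cases i with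
    | none => exact continuousOn_const
    | some k => exact fun x hx => (hz x hx.1 k).continuousAt.continuousWithinAt
  have hH0 : H 0 ≤ c := by
    refine sup'_le _ _ fun i _ => ?_
    cases i with
    | none => exact le_rfl
    | some k => exact h0 k
  have hslope (x : ℝ) (hx : x ∈ Ico 0 t) (ρ : ℝ) (hρ : 0 < ρ) :
      ∃ᶠ y in 𝓝[>] x, slope H x y < ρ := by
    refine (eventually_slope_finset_sup'_lt univ_nonempty hρ (fun i _ => ?_)
      fun i _ hi => ?_).frequently
    · cases i with
      | none => exact continuousWithinAt_const
      | some k => exact (hz x hx.1 k).continuousAt.continuousWithinAt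
    · cases i with
      | none => exact ⟨0, le_rfl, hasDerivWithinAt_const _ _ _⟩
      | some k =>
        have hck : c ≤ z x k := (hu_le x none).trans_eq hi.symm
        have hmax (l : ι) : z x l ≤ z x k := (hu_le x (some l)).trans_eq hi.symm
        exact ⟨v x k, hv x hx.1 k hck hmax, (hz x hx.1 k).hasDerivWithinAt⟩
  have hHt : H t ≤ c :=
    image_le_of_liminf_slope_right_le_deriv_boundary (B := fun _ => c) (B' := fun _ => 0) hcont hH0
      continuousOn_const (fun _ _ => hasDerivWithinAt_const _ _ _) hslope ⟨ht, le_rfl⟩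
  exact (hu_le t (some j)).trans hHt

theorem le_of_hasDerivAt_nonneg_at_min
    (hz : ∀ t, 0 ≤ t → ∀ j, HasDerivAt (fun s => z s j) (v t j) t)
    (hv : ∀ t, 0 ≤ t → ∀ j, z t j ≤ c → (∀ k, z t j ≤ z t k) → 0 ≤ v t j)
    (h0 : ∀ j, c ≤ z 0 j) (ht : 0 ≤ t) (j : ι) : c ≤ z t j := by
  have hneg := le_of_hasDerivAt_nonpos_at_max (z := -z) (v := -v) (c := -c)
    (fun t ht j => (hz t ht j).neg)
    (fun t ht j hcj hmin => by
      simp only [Pi.neg_apply, neg_le_neg_iff, neg_nonpos] at hcj hmin ⊢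
      exact hv t ht j hcj hmin)
    (fun j => neg_le_neg (h0 j)) ht j
  simpa using hneg

end Invariance

section SelfFunction

/-- The self function `S_i` of the paper is `selfFunction (w_i r_i / B) p_i r_i`. -/
noncomputable def selfFunction (c p d x : ℝ) : ℝ := -c * (x - p) - x ^ 3 / d

variable {c p d m x : ℝ}

theorem selfFunction_antitone (hc : 0 ≤ c) (hd : 0 < d) : Antitone (selfFunction c p d) := by
  intro x y hxy
  have hlin : c * (x - p) ≤ c * (y - p) := by gcongr
  have hcube : x ^ 3 / d ≤ y ^ 3 / d :=
    div_le_div_of_nonneg_right ((Odd.pow_le_pow (n := 3) (by decide)).2 hxy) hd.le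
  simp only [selfFunction]
  linarith

variable {ι : Type*} [Fintype ι] {κ y : ι → ℝ}

theorem self_add_coupling_nonpos_of_max (hc : 0 ≤ c) (hd : 0 < d) (hκ : ∀ k, 0 ≤ κ k)
    (hm : selfFunction c p d m = 0) (hmx : m ≤ x) (hmax : ∀ k, y k ≤ x) :
    -c * (x - p) + ∑ k, κ k * (y k - x) - x ^ 3 / d ≤ 0 := by
  have hself : selfFunction c p d x ≤ 0 := (selfFunction_antitone hc hd hmx).trans_eq hm
  have hcoupling : ∑ k, κ k * (y k - x) ≤ 0 :=
    sum_nonpos fun k _ => mul_nonpos_of_nonneg_of_nonpos (hκ k) (sub_nonpos.2 (hmax k))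
  simp only [selfFunction] at hself
  linarith

theorem self_add_coupling_nonneg_of_min (hc : 0 ≤ c) (hd : 0 < d) (hκ : ∀ k, 0 ≤ κ k)
    (hm : selfFunction c p d m = 0) (hxm : x ≤ m) (hmin : ∀ k, x ≤ y k) :
    0 ≤ -c * (x - p) + ∑ k, κ k * (y k - x) - x ^ 3 / d := by
  have hself : 0 ≤ selfFunction c p d x := hm.symm.trans_le (selfFunction_antitone hc hd hxm)
  have hcoupling : 0 ≤ ∑ k, κ k * (y k - x) :=
    sum_nonneg fun k _ => mul_nonneg (hκ k) (sub_nonneg.2 (hmin k))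
  simp only [selfFunction] at hself
  linarith

end SelfFunction

theorem consensus_box_positively_invariant_general
    (n : ℕ) (p w r : Fin n → ℝ) (a : Fin n → Fin n → ℝ)
    (hw : ∀ i, 0 < w i) (hr : ∀ i, 0 < r i)
    (B : ℝ) (hB : B = ∑ k, r k)
    (hpos : ∀ i k, 0 ≤ a i k)
    (f : (Fin n → ℝ) → Fin n → ℝ)
    (hf : ∀ z i, f z i =
      -(w i * r i / B) * (z i - p i) + (∑ k, (a i k * r k / B) * (z k - z i))
        - (z i) ^ 3 / r i)
    (m : Fin n → ℝ)
    (hm : ∀ i, -(w i * r i / B) * (m i - p i) - (m i) ^ 3 / r i = 0)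
    (z : ℝ → Fin n → ℝ)
    (hsol : ∀ t : ℝ, 0 ≤ t → ∀ j, HasDerivAt (fun s => z s j) (f (z t) j) t)
    (hinit : ∀ i, (⨅ j, m j) ≤ z 0 i ∧ z 0 i ≤ ⨆ j, m j) :
    ∀ t : ℝ, 0 ≤ t → ∀ i, (⨅ j, m j) ≤ z t i ∧ z t i ≤ ⨆ j, m j := by
  intro t ht i
  have hB0 : 0 < B := hB ▸ sum_pos (fun k _ => hr k) ⟨i, mem_univ i⟩
  have hc (j : Fin n) : 0 ≤ w j * r j / B := by have := hw j; have := hr j; positivity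
  have hκ (j k : Fin n) : 0 ≤ a j k * r k / B := by have := hpos j k; have := hr k; positivity
  have hmin (j : Fin n) : ⨅ k, m k ≤ m j := ciInf_le (finite_range m).bddBelow j
  have hmax (j : Fin n) : m j ≤ ⨆ k, m k := le_ciSup (finite_range m).bddAbove j
  constructor
  · refine le_of_hasDerivAt_nonneg_at_min hsol (fun s _ j hzj hjmin => ?_)
      (fun j => (hinit j).1) ht i
    rw [hf]
    exact self_add_coupling_nonneg_of_min (hc j) (hr j) (hκ j) (hm j) (hzj.trans (hmin j)) hjmin
  · refine le_of_hasDerivAt_nonpos_at_max hsol (fun s _ j hzj hjmax => ?_)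
      (fun j => (hinit j).2) ht i
    rw [hf]
    exact self_add_coupling_nonpos_of_max (hc j) (hr j) (hκ j) (hm j) ((hmax j).trans hzj) hjmax

/-- Positive invariance of the consensus box `[m_min, m_max]ⁿ` in the absence of
antagonistic relations. -/
theorem consensus_box_positively_invariant
    (n : ℕ) (hn : 0 < n) (p w r : Fin n → ℝ) (a : Fin n → Fin n → ℝ)
    (hw : ∀ i, 0 < w i) (hr : ∀ i, 0 < r i)
    (B : ℝ) (hB : B = ∑ k, r k)
    (hpos : ∀ i k, 0 ≤ a i k)
    (f : (Fin n → ℝ) → Fin n → ℝ)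
    (hf : ∀ z i, f z i =
      -(w i * r i / B) * (z i - p i) + (∑ k, (a i k * r k / B) * (z k - z i))
        - (z i) ^ 3 / r i)
    (m : Fin n → ℝ)
    (hm : ∀ i, -(w i * r i / B) * (m i - p i) - (m i) ^ 3 / r i = 0)
    (z : ℝ → Fin n → ℝ)
    (hdiff : ∀ j, Differentiable ℝ (fun t => z t j))
    (hsol : ∀ t : ℝ, 0 ≤ t → ∀ j, HasDerivAt (fun s => z s j) (f (z t) j) t)
    (hinit : ∀ i, (⨅ j, m j) ≤ z 0 i ∧ z 0 i ≤ ⨆ j, m j) :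
    ∀ t : ℝ, 0 ≤ t → ∀ i, (⨅ j, m j) ≤ z t i ∧ z t i ≤ ⨆ j, m j :=
  consensus_box_positively_invariant_general n p w r a hw hr B hB hpos f hf m hm z hsol hinit
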